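/- For n complex numbers ζ₁,…,ζₙ on the unit circle, none equal to 1, with xᵢ = τ(ζᵢ) = i(1+ζᵢ)/(1-ζᵢ) ∈ ℝ, the Vandermonde determinants satisfy |Δ(ζ₁,…,ζₙ)| = 2^{n(n-1)/2} |Δ(x₁,…,xₙ)| ∏ᵢ (1+xᵢ²)^{-(n-1)/2}. -/

import Mathlib

/-! The inverse Cayley transform is `ζ = (x - i)/(x + i)`, so for real `x, y`
`ζ_y - ζ_x = 2i (y - x) / ((y + i)(x + i))` with `|x + i| = √(1 + x²)`. Taking the product over all
pairs `i < j`, each index `i` occurs in exactly `n - 1` pairs, which produces the factor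
`(1 + x_i²)^{-(n-1)/2}`, and there are `n(n-1)/2` pairs, each contributing a factor `2`. -/

open Finset Complex

theorem Fin.sum_card_Ioi (n : ℕ) : ∑ i : Fin n, #(Ioi i) = n * (n - 1) / 2 := by
  simp_rw [Fin.card_Ioi]
  rw [Fin.sum_univ_eq_sum_range (fun i => n - 1 - i), ← sum_range_reflect, ← sum_range_id]
  refine sum_congr rfl fun i hi => ?_
  simp only [mem_range] at hi
  omega

theorem Fin.prod_prod_Ioi_const {M : Type*} [CommMonoid M] (n : ℕ) (c : M) :
    ∏ i : Fin n, ∏ _j ∈ Ioi i, c = c ^ (n * (n - 1) / 2) := by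
  rw [← Fin.sum_card_Ioi, ← prod_pow_eq_pow_sum]
  simp only [Finset.prod_const]

theorem Fin.prod_prod_Ioi_mul_prod_prod_Ioi {M : Type*} [CommMonoid M] {n : ℕ} (w : Fin n → M) :
    (∏ i : Fin n, ∏ j ∈ Ioi i, w j) * ∏ i : Fin n, ∏ _j ∈ Ioi i, w i = ∏ i, w i ^ (n - 1) := by
  have hswap : ∏ i : Fin n, ∏ j ∈ Ioi i, w j = ∏ j : Fin n, ∏ _i ∈ Iio j, w j :=
    prod_comm' fun i j => by
      simp only [mem_univ, true_and, and_true, Finset.mem_Ioi, Finset.mem_Iio]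
  simp_rw [hswap, Finset.prod_const, Fin.card_Iio, Fin.card_Ioi, ← prod_mul_distrib,
    ← pow_add]
  exact prod_congr rfl fun i _ => by rw [Nat.add_sub_of_le (by omega)]

noncomputable def cayleyInv (x : ℝ) : ℂ := (x - I) / (x + I)

theorem ofReal_add_I_ne_zero (x : ℝ) : (x : ℂ) + I ≠ 0 := fun h => by
  simpa using congrArg Complex.im h

theorem norm_ofReal_add_I (x : ℝ) : ‖(x : ℂ) + I‖ = √(1 + x ^ 2) := by
  rw [norm_def, normSq_apply]
  congr 1
  simp only [add_re, ofReal_re, I_re, add_im, ofReal_im, I_im]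
  ring

theorem eq_cayleyInv {ζ : ℂ} {x : ℝ} (hne : ζ ≠ 1) (hx : (x : ℂ) = I * (1 + ζ) / (1 - ζ)) :
    ζ = cayleyInv x := by
  rw [cayleyInv, eq_div_iff (ofReal_add_I_ne_zero x)]
  rw [eq_div_iff (sub_ne_zero.mpr hne.symm)] at hx
  linear_combination -hx

theorem cayleyInv_sub_cayleyInv (x y : ℝ) :
    cayleyInv y - cayleyInv x = 2 * I * ((y - x : ℝ) : ℂ) / ((y + I) * (x + I)) := by
  rw [cayleyInv, cayleyInv, div_sub_div _ _ (ofReal_add_I_ne_zero y) (ofReal_add_I_ne_zero x)]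
  push_cast
  ring_nf

theorem norm_cayleyInv_sub_cayleyInv (x y : ℝ) :
    ‖cayleyInv y - cayleyInv x‖ = 2 * |y - x| * ((√(1 + y ^ 2))⁻¹ * (√(1 + x ^ 2))⁻¹) := by
  rw [cayleyInv_sub_cayleyInv, norm_div, norm_mul, norm_mul, norm_mul, norm_real, norm_I,
    Complex.norm_two, norm_ofReal_add_I, norm_ofReal_add_I, Real.norm_eq_abs]
  field_simp

theorem inv_sqrt_pow_eq_rpow {a : ℝ} (ha : 0 ≤ a) (m : ℕ) : (√a)⁻¹ ^ m = a ^ (-(m : ℝ) / 2) := by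
  rw [Real.sqrt_eq_rpow, ← Real.rpow_neg_one, ← Real.rpow_mul ha, ← Real.rpow_natCast,
    ← Real.rpow_mul ha]
  ring_nf

theorem vandermonde_cayley (n : ℕ) (ζ : Fin n → ℂ) (x : Fin n → ℝ)
    (hne : ∀ i, ζ i ≠ 1)
    (hx : ∀ i, ((x i : ℝ) : ℂ) = Complex.I * (1 + ζ i) / (1 - ζ i)) :
    ‖∏ i, ∏ j ∈ Finset.Ioi i, (ζ j - ζ i)‖
      = 2 ^ (n * (n - 1) / 2) * |∏ i, ∏ j ∈ Finset.Ioi i, (x j - x i)|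
        * ∏ i, (1 + x i ^ 2) ^ (-((n : ℝ) - 1) / 2) := by
  obtain rfl : ζ = fun i => cayleyInv (x i) := funext fun i => eq_cayleyInv (hne i) (hx i)
  simp_rw [norm_prod, norm_cayleyInv_sub_cayleyInv, abs_prod, prod_mul_distrib,
    Fin.prod_prod_Ioi_const, Fin.prod_prod_Ioi_mul_prod_prod_Ioi fun i => (√(1 + x i ^ 2))⁻¹]
  -- the exponent `n - 1` truncates at `n = 0` in `ℕ` but not in `ℝ`
  rcases n with _ | n
  · simp
  · simp_rw [inv_sqrt_pow_eq_rpow (by positivity : (0 : ℝ) ≤ 1 + _ ^ 2)]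
    push_cast
    ring_nf
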